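/- Let $X$ be an $n \times n$ lower Hessenberg matrix with distinct eigenvalues $\lambda_1, \dots, \lambda_n$, let $L$ be a lower unipotent matrix with $L^{-1} X L = \epsilon_\Lambda$ (the upper bidiagonal matrix with diagonal $\Lambda$ and superdiagonal $1$'s), and let $U$ be the upper triangular matrix with $u_{ij} = \prod_{k=1}^{i-1}(\lambda_j - \lambda_k)$ for $i \le j$. Then $X (L U) = (L U) \operatorname{diag}(\lambda_1, \dots, \lambda_n)$; i.e., the columns of $LU$ are eigenvectors of $X$. -/

import Mathlib

/-!
Row `i` of `ε_Λ` says `x · N_i(x) = λ_i N_i(x) + N_{i+1}(x)` for the Newton basis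
`N_i(x) = ∏_{k<i} (x - λ_k)`, and `U` is the matrix `u_{ij} = N_i(λ_j)`; evaluating at `λ_j`
gives `ε_Λ U = U diag(Λ)`. Since `L` is unipotent it is invertible and `X L = L ε_Λ`, hence
`X (L U) = L ε_Λ U = (L U) diag(Λ)`.
-/

open Matrix Finset

variable {R : Type*} [CommRing R] {n : ℕ}

def upperBidiagonal (d : Fin n → R) : Matrix (Fin n) (Fin n) R :=
  of fun i j => if i = j then d i else if (j : ℕ) = i + 1 then 1 else 0

def newtonMatrix (lam : Fin n → R) : Matrix (Fin n) (Fin n) R :=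
  of fun i j => if i ≤ j then ∏ k ∈ Iio i, (lam j - lam k) else 0

theorem newtonMatrix_apply (lam : Fin n → R) (i j : Fin n) :
    newtonMatrix lam i j = if i ≤ j then ∏ k ∈ Iio i, (lam j - lam k) else 0 :=
  rfl

theorem upperBidiagonal_mul_apply (d : Fin n → R) (M : Matrix (Fin n) (Fin n) R) (i j : Fin n) :
    (upperBidiagonal d * M) i j =
      d i * M i j + if h : (i : ℕ) + 1 < n then M ⟨i + 1, h⟩ j else 0 := by
  have hrow : ∀ k, upperBidiagonal d i k = (Pi.single i (d i) : Fin n → R) k +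
      if h : (i : ℕ) + 1 < n then (Pi.single ⟨i + 1, h⟩ 1 : Fin n → R) k else 0 := by
    intro k
    simp only [upperBidiagonal, of_apply, Pi.single_apply, Fin.ext_iff]
    have := k.isLt
    split_ifs <;> first | (exfalso; omega) | simp
  simp only [mul_apply, hrow, add_mul, sum_add_distrib]
  split_ifs <;> simp [Pi.single_apply]

/-- The recursion `N_{i+1} = (x - λ_i) N_i`, with the row below the last one read as zero. -/
theorem newtonMatrix_next (lam : Fin n → R) (i j : Fin n) :
    (if h : (i : ℕ) + 1 < n then newtonMatrix lam ⟨i + 1, h⟩ j else 0) =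
      (lam j - lam i) * newtonMatrix lam i j := by
  simp only [newtonMatrix_apply]
  rcases lt_trichotomy i j with hij | rfl | hji
  · have h : (i : ℕ) + 1 < n := by omega
    have hIio : Iio (⟨i + 1, h⟩ : Fin n) = insert i (Iio i) := by
      ext k
      simp only [mem_Iio, mem_insert, Fin.lt_def, Fin.ext_iff]
      omega
    rw [dif_pos h, if_pos (show (⟨i + 1, h⟩ : Fin n) ≤ j from hij), if_pos hij.le, hIio,
      prod_insert notMem_Iio_self]
  · rw [sub_self, zero_mul]
    split_ifs with h hle <;> first | rfl | exact absurd (Fin.le_def.1 hle) (by simp)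
  · rw [if_neg hji.not_ge, mul_zero]
    split_ifs with h hle <;> first | rfl | exact absurd (Fin.le_def.1 hle) (by simp; omega)

theorem upperBidiagonal_mul_newtonMatrix (lam : Fin n → R) :
    upperBidiagonal lam * newtonMatrix lam = newtonMatrix lam * diagonal lam := by
  ext i j
  rw [upperBidiagonal_mul_apply, newtonMatrix_next, mul_diagonal]
  ring

theorem hessenberg_eigenvectors_LU_general (n : ℕ) (X : Matrix (Fin n) (Fin n) ℝ)
    (lam : Fin n → ℝ)
    (L : Matrix (Fin n) (Fin n) ℝ)
    (hLlow : ∀ i j : Fin n, i < j → L i j = 0)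
    (hLdiag : ∀ i : Fin n, L i i = 1)
    (eps : Matrix (Fin n) (Fin n) ℝ)
    (heps : ∀ i j : Fin n, eps i j =
      if i = j then lam i else if (j : ℕ) = (i : ℕ) + 1 then 1 else 0)
    (hconj : L⁻¹ * X * L = eps)
    (U : Matrix (Fin n) (Fin n) ℝ)
    (hU : ∀ i j : Fin n, U i j =
      if i ≤ j then ∏ k ∈ Finset.Iio i, (lam j - lam k) else 0) :
    X * (L * U) = (L * U) * Matrix.diagonal lam := by
  obtain rfl : eps = upperBidiagonal lam := Matrix.ext heps
  obtain rfl : U = newtonMatrix lam := Matrix.ext hU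
  have hL : IsUnit L.det := by
    rw [det_of_isLowerTriangular L hLlow]
    simp [hLdiag]
  have hXL : X * L = L * upperBidiagonal lam := by
    rw [← hconj, Matrix.mul_assoc L⁻¹, mul_nonsing_inv_cancel_left _ _ hL]
  rw [← Matrix.mul_assoc, hXL, Matrix.mul_assoc, upperBidiagonal_mul_newtonMatrix,
    Matrix.mul_assoc]

/-- If a lower Hessenberg matrix `X` is conjugated by a lower unipotent `L` to the
upper bidiagonal matrix `ε_Λ` with distinct diagonal `λ`, then the columns of `L * U`
(with `U` the explicit upper triangular matrix) are eigenvectors of `X`. -/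
theorem hessenberg_eigenvectors_LU (n : ℕ) (X : Matrix (Fin n) (Fin n) ℝ)
    (hHess : ∀ i j : Fin n, (j : ℕ) > (i : ℕ) + 1 → X i j = 0)
    (lam : Fin n → ℝ) (hdist : Function.Injective lam)
    (L : Matrix (Fin n) (Fin n) ℝ)
    (hLlow : ∀ i j : Fin n, i < j → L i j = 0)
    (hLdiag : ∀ i : Fin n, L i i = 1)
    (eps : Matrix (Fin n) (Fin n) ℝ)
    (heps : ∀ i j : Fin n, eps i j =
      if i = j then lam i else if (j : ℕ) = (i : ℕ) + 1 then 1 else 0)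
    (hconj : L⁻¹ * X * L = eps)
    (U : Matrix (Fin n) (Fin n) ℝ)
    (hU : ∀ i j : Fin n, U i j =
      if i ≤ j then ∏ k ∈ Finset.Iio i, (lam j - lam k) else 0) :
    X * (L * U) = (L * U) * Matrix.diagonal lam :=
  hessenberg_eigenvectors_LU_general n X lam L hLlow hLdiag eps heps hconj U hU
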